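/- arXiv:2511.11098 — 3 statements merged into one kernel-verified Lean document; each statement's English description precedes it below -/
import Mathlib

section
/- Let $(\mathcal Y, d)$ be a metric space with a second metric $d^*$ on $\mathcal Y$, and let $(\mathcal Z, d_{\mathcal Z})$ be a linear metric space with shift-invariant metric. Suppose there exists $\gamma > 0$ with $d(y_1,y_2) \le \gamma\, d^*(y_1,y_2)$ for all $y_1,y_2$. Let $\Phi : \mathcal Y \rightrightarrows \mathcal Z$ be strongly metrically sub-regular at $(\hat y,\hat z)$ with parameters $\alpha',\beta',\kappa'$ (with respect to $d$ and $d^*$). Let positive numbers $\epsilon,\mu,\kappa,\alpha,\beta$ satisfy $\alpha\le\alpha'$, $\beta+\mu\alpha+\epsilon\le\beta'$, $\mu\gamma\kappa'<1$, and $\kappa=\kappa'/(1-\mu\gamma\kappa')$. Then for every function $\varphi:\mathcal Y\to\mathcal Z$ with $d_{\mathcal Z}(\varphi(\hat y),0)\le\epsilon$ and $d_{\mathcal Z}(\varphi(y),\varphi(\hat y))\le\mu\, d(y,\hat y)$ for all $y$ in the closed $d$-ball of radius $\alpha$ about $\hat y$, the map $\varphi+\Phi$ is strongly metrically sub-regular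 at $(\hat y,\hat z+\varphi(\hat y))$ with parameters $\alpha,\beta,\kappa$. -/
/-- A distance function satisfying the metric axioms. -/
def IsMetric {Y : Type*} (d : Y → Y → ℝ) : Prop :=
  (∀ y, d y y = 0) ∧ (∀ y1 y2, 0 ≤ d y1 y2) ∧ (∀ y1 y2, d y1 y2 = d y2 y1) ∧
    (∀ y1 y2 y3, d y1 y3 ≤ d y1 y2 + d y2 y3) ∧ (∀ y1 y2, d y1 y2 = 0 → y1 = y2)

/-- Strong metric sub-regularity of a set-valued map `Φ : Y ⇉ Z` at `(ŷ, ẑ)`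
with respect to the metrics `d` and `dstar` on `Y` and `dZ` on `Z`,
with parameters `α, β, κ`. -/
def SsR {Y Z : Type*} (d dstar : Y → Y → ℝ) (dZ : Z → Z → ℝ)
    (Φ : Y → Set Z) (yh : Y) (zh : Z) (α β κ : ℝ) : Prop :=
  zh ∈ Φ yh ∧ ∀ y z, d y yh ≤ α → z ∈ Φ y → dZ z zh ≤ β → dstar y yh ≤ κ * dZ z zh

/-!
Write a point of `(φ + Φ)(y)` as `φ y + w` with `w ∈ Φ y`. By shift invariance and the Lipschitz
bound on `φ`, `d_Z(w, ẑ)` exceeds `d_Z(φ y + w, ẑ + φ ŷ)` by at most `μ d(y, ŷ) ≤ μ γ d*(y, ŷ)`,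
so `w` lies in the `β'`-ball where sub-regularity of `Φ` applies. This gives
`d*(y, ŷ) ≤ κ' (d_Z(φ y + w, ẑ + φ ŷ) + μ γ d*(y, ŷ))`, and since `μ γ κ' < 1` the `d*` term can be
absorbed into the left-hand side.
-/

lemma IsMetric.le_add_add_of_shift_invariant {Z : Type*} [AddCommGroup Z] {dZ : Z → Z → ℝ}
    (hdZ : IsMetric dZ) (hshift : ∀ z1 z2 w : Z, dZ (z1 + w) (z2 + w) = dZ z1 z2)
    (a b w z : Z) : dZ w z ≤ dZ (a + w) (z + b) + dZ a b := by
  obtain ⟨-, -, hsymm, htri, -⟩ := hdZ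
  calc dZ w z = dZ (a + w) (z + a) := by rw [add_comm a w, hshift]
    _ ≤ dZ (a + w) (z + b) + dZ (z + b) (z + a) := htri _ _ _
    _ = dZ (a + w) (z + b) + dZ a b := by
        rw [hsymm a b, ← hshift b a z, add_comm b z, add_comm a z]

lemma le_div_one_sub_mul_of_le_mul_add {x a k c : ℝ} (hck : c * k < 1)
    (h : x ≤ k * (a + c * x)) : x ≤ k / (1 - c * k) * a := by
  rw [div_mul_eq_mul_div, le_div_iff₀ (by linarith)]
  linarith

theorem stmt0_general {Y Z : Type*} [AddCommGroup Z]
    (d dstar : Y → Y → ℝ) (dZ : Z → Z → ℝ)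
    (hdZ : IsMetric dZ)
    (hshift : ∀ z1 z2 w : Z, dZ (z1 + w) (z2 + w) = dZ z1 z2)
    (γ : ℝ) (hcomp : ∀ y1 y2, d y1 y2 ≤ γ * dstar y1 y2)
    (Φ : Y → Set Z) (yh : Y) (zh : Z) (α' β' κ' : ℝ)
    (hκ' : 0 < κ')
    (hΦ : SsR d dstar dZ Φ yh zh α' β' κ')
    (ε μ κ α β : ℝ) (hε : 0 < ε) (hμ : 0 < μ)
    (h1 : α ≤ α') (h2 : β + μ * α + ε ≤ β') (h3 : μ * γ * κ' < 1)
    (h4 : κ = κ' / (1 - μ * γ * κ'))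
    (φ : Y → Z)
    (hφLip : ∀ y, d y yh ≤ α → dZ (φ y) (φ yh) ≤ μ * d y yh) :
    SsR d dstar dZ (fun y => (fun w => φ y + w) '' Φ y) yh (zh + φ yh) α β κ := by
  obtain ⟨hzh, hsubreg⟩ := hΦ
  refine ⟨⟨zh, hzh, add_comm _ _⟩, ?_⟩
  rintro y _ hy ⟨w, hw, rfl⟩ hzβ
  have hwz : dZ w zh ≤ dZ (φ y + w) (zh + φ yh) + μ * d y yh :=
    (hdZ.le_add_add_of_shift_invariant hshift _ _ w zh).trans (by gcongr; exact hφLip y hy)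
  have hμd : μ * d y yh ≤ μ * α := by gcongr
  have hstar := hsubreg y w (hy.trans h1) hw (by linarith)
  rw [h4]
  refine le_div_one_sub_mul_of_le_mul_add h3 (hstar.trans ?_)
  calc κ' * dZ w zh ≤ κ' * (dZ (φ y + w) (zh + φ yh) + μ * d y yh) := by gcongr
    _ ≤ κ' * (dZ (φ y + w) (zh + φ yh) + μ * γ * dstar y yh) := by
        rw [mul_assoc μ γ]; gcongr; exact hcomp y yh

theorem stmt0 {Y Z : Type*} [AddCommGroup Z]
    (d dstar : Y → Y → ℝ) (dZ : Z → Z → ℝ)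
    (hd : IsMetric d) (hdstar : IsMetric dstar) (hdZ : IsMetric dZ)
    (hshift : ∀ z1 z2 w : Z, dZ (z1 + w) (z2 + w) = dZ z1 z2)
    (γ : ℝ) (hγ : 0 < γ) (hcomp : ∀ y1 y2, d y1 y2 ≤ γ * dstar y1 y2)
    (Φ : Y → Set Z) (yh : Y) (zh : Z) (α' β' κ' : ℝ)
    (hα' : 0 < α') (hβ' : 0 < β') (hκ' : 0 < κ')
    (hΦ : SsR d dstar dZ Φ yh zh α' β' κ')
    (ε μ κ α β : ℝ) (hε : 0 < ε) (hμ : 0 < μ) (hκpos : 0 < κ) (hα : 0 < α) (hβ : 0 < β)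
    (h1 : α ≤ α') (h2 : β + μ * α + ε ≤ β') (h3 : μ * γ * κ' < 1)
    (h4 : κ = κ' / (1 - μ * γ * κ'))
    (φ : Y → Z)
    (hφ0 : dZ (φ yh) 0 ≤ ε)
    (hφLip : ∀ y, d y yh ≤ α → dZ (φ y) (φ yh) ≤ μ * d y yh) :
    SsR d dstar dZ (fun y => (fun w => φ y + w) '' Φ y) yh (zh + φ yh) α β κ :=
  stmt0_general d dstar dZ hdZ hshift γ hcomp Φ yh zh α' β' κ' hκ' hΦ ε μ κ α β hε hμ h1 h2 h3 h4 φ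
    hφLip
end

section
/- Let $U\subset\mathbb R^m$ be bounded and $\Gamma\subset[0,T]$ finite. The function $d^*(u_1,u_2) := \inf\{\varepsilon>0 : |u_1(t)-u_2(t)|\le\varepsilon \text{ for a.e. } t\in[0,T]\setminus(\Gamma+[-\varepsilon,\varepsilon])\}$ defines a metric on the set of (equivalence classes of a.e. equal) measurable functions $u:[0,T]\to U$; in particular it satisfies the triangle inequality $d^*(u_1,u_3)\le d^*(u_1,u_2)+d^*(u_2,u_3)$. -/
/-!
A pair of admissible tolerances `ε₁` for `(u₁, u₂)` and `ε₂` for `(u₂, u₃)` gives the admissible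
tolerance `ε₁ + ε₂` for `(u₁, u₃)`, because the excluded neighbourhood `Γ + [-ε, ε]` grows with `ε`;
this is the triangle inequality once the admissible sets are known to be nonempty, which is where
the boundedness of `U` enters. If `d^* = 0`, admissible tolerances `δₙ → 0` exist; a point
`t ∈ [0,T] \ Γ` lies outside `Γ + [-δₙ, δₙ]` for all large `n` (as `Γ` is finite), so
`u₁ t = u₂ t` for a.e. `t`, `Γ` being null.
-/

open MeasureTheory Set

/-- The metric `d^*` on controls: the infimum of all `ε > 0` such that
`|u1(t) - u2(t)| ≤ ε` for a.e. `t ∈ [0,T] \ (Γ + [-ε, ε])`. -/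
noncomputable def dstar {m : ℕ} (T : ℝ) (Γ : Finset ℝ)
    (u1 u2 : ℝ → EuclideanSpace ℝ (Fin m)) : ℝ :=
  sInf {ε : ℝ | 0 < ε ∧
    ∀ᵐ t ∂(volume.restrict (Icc 0 T \ ⋃ s ∈ (Γ : Set ℝ), Icc (s - ε) (s + ε))),
      ‖u1 t - u2 t‖ ≤ ε}

open Filter Topology

section

variable {m : ℕ} {T : ℝ} {Γ : Finset ℝ}

def dstarDomain (T : ℝ) (Γ : Finset ℝ) (ε : ℝ) : Set ℝ :=
  Icc 0 T \ ⋃ s ∈ (Γ : Set ℝ), Icc (s - ε) (s + ε)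

def dstarSet (T : ℝ) (Γ : Finset ℝ) (u v : ℝ → EuclideanSpace ℝ (Fin m)) : Set ℝ :=
  {ε | 0 < ε ∧ ∀ᵐ t ∂(volume.restrict (dstarDomain T Γ ε)), ‖u t - v t‖ ≤ ε}

lemma dstar_eq_sInf (T : ℝ) (Γ : Finset ℝ) (u v : ℝ → EuclideanSpace ℝ (Fin m)) :
    dstar T Γ u v = sInf (dstarSet T Γ u v) := rfl

lemma measurableSet_dstarDomain (T : ℝ) (Γ : Finset ℝ) (ε : ℝ) :
    MeasurableSet (dstarDomain T Γ ε) :=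
  measurableSet_Icc.diff (Γ.finite_toSet.measurableSet_biUnion fun _ _ ↦ measurableSet_Icc)

lemma dstarDomain_subset_Icc (T : ℝ) (Γ : Finset ℝ) (ε : ℝ) : dstarDomain T Γ ε ⊆ Icc 0 T :=
  sdiff_subset

lemma dstarDomain_antitone (T : ℝ) (Γ : Finset ℝ) : Antitone (dstarDomain T Γ) :=
  fun _ _ hε ↦ sdiff_subset_sdiff_right <|
    iUnion₂_mono fun _ _ ↦ Icc_subset_Icc (by linarith) (by linarith)

lemma eventually_mem_dstarDomain {t : ℝ} (ht : t ∈ Icc 0 T) (htΓ : t ∉ Γ) :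
    ∀ᶠ ε in 𝓝 0, t ∈ dstarDomain T Γ ε := by
  have hfar : ∀ s ∈ Γ, ∀ᶠ ε in 𝓝 (0 : ℝ), ε < |t - s| := fun s hs ↦
    Iio_mem_nhds (abs_pos.mpr (sub_ne_zero.mpr fun hts ↦ htΓ (hts ▸ hs)))
  filter_upwards [(eventually_all_finset Γ).mpr hfar] with ε hε
  refine ⟨ht, ?_⟩
  simp only [mem_iUnion, Finset.mem_coe, not_exists]
  intro s hs hts
  have : |t - s| ≤ ε := abs_le.mpr ⟨by linarith [hts.1], by linarith [hts.2]⟩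
  exact (hε s hs).not_ge this

lemma bddBelow_dstarSet (T : ℝ) (Γ : Finset ℝ) (u v : ℝ → EuclideanSpace ℝ (Fin m)) :
    BddBelow (dstarSet T Γ u v) :=
  ⟨0, fun _ hε ↦ hε.1.le⟩

lemma dstar_nonneg (T : ℝ) (Γ : Finset ℝ) (u v : ℝ → EuclideanSpace ℝ (Fin m)) :
    0 ≤ dstar T Γ u v :=
  Real.sInf_nonneg fun _ hε ↦ hε.1.le

lemma dstarSet_comm (T : ℝ) (Γ : Finset ℝ) (u v : ℝ → EuclideanSpace ℝ (Fin m)) :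
    dstarSet T Γ u v = dstarSet T Γ v u := by
  simp only [dstarSet, norm_sub_rev (u _)]

lemma dstar_comm (T : ℝ) (Γ : Finset ℝ) (u v : ℝ → EuclideanSpace ℝ (Fin m)) :
    dstar T Γ u v = dstar T Γ v u := by
  rw [dstar_eq_sInf, dstar_eq_sInf, dstarSet_comm]

lemma dstarSet_nonempty {U : Set (EuclideanSpace ℝ (Fin m))} (hU : Bornology.IsBounded U)
    {u v : ℝ → EuclideanSpace ℝ (Fin m)}
    (hu : ∀ᵐ t ∂(volume.restrict (Icc 0 T)), u t ∈ U)
    (hv : ∀ᵐ t ∂(volume.restrict (Icc 0 T)), v t ∈ U) :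
    (dstarSet T Γ u v).Nonempty := by
  obtain ⟨R, hR, hUR⟩ := hU.exists_pos_norm_le
  refine ⟨R + R, by positivity, ?_⟩
  filter_upwards [ae_restrict_of_ae_restrict_of_subset (dstarDomain_subset_Icc T Γ _)
    (hu.and hv)] with t ⟨htu, htv⟩
  exact (norm_sub_le _ _).trans (add_le_add (hUR _ htu) (hUR _ htv))

lemma add_mem_dstarSet {u v w : ℝ → EuclideanSpace ℝ (Fin m)} {ε₁ ε₂ : ℝ}
    (h₁ : ε₁ ∈ dstarSet T Γ u v) (h₂ : ε₂ ∈ dstarSet T Γ v w) :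
    ε₁ + ε₂ ∈ dstarSet T Γ u w := by
  obtain ⟨hε₁, hae₁⟩ := h₁
  obtain ⟨hε₂, hae₂⟩ := h₂
  have hsub₁ := dstarDomain_antitone T Γ (le_add_of_nonneg_right (a := ε₁) hε₂.le)
  have hsub₂ := dstarDomain_antitone T Γ (le_add_of_nonneg_left (a := ε₂) hε₁.le)
  refine ⟨add_pos hε₁ hε₂, ?_⟩
  filter_upwards [ae_restrict_of_ae_restrict_of_subset hsub₁ hae₁,
    ae_restrict_of_ae_restrict_of_subset hsub₂ hae₂] with t ht₁ ht₂
  exact (norm_sub_le_norm_sub_add_norm_sub _ _ _).trans (add_le_add ht₁ ht₂)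

lemma dstar_le_add {u v w : ℝ → EuclideanSpace ℝ (Fin m)}
    (huv : (dstarSet T Γ u v).Nonempty) (hvw : (dstarSet T Γ v w).Nonempty) :
    dstar T Γ u w ≤ dstar T Γ u v + dstar T Γ v w := by
  rw [dstar_eq_sInf, dstar_eq_sInf, dstar_eq_sInf,
    ← csInf_add huv (bddBelow_dstarSet ..) hvw (bddBelow_dstarSet ..)]
  refine csInf_le_csInf (bddBelow_dstarSet ..) (huv.add hvw) ?_
  rintro _ ⟨ε₁, h₁, ε₂, h₂, rfl⟩
  exact add_mem_dstarSet h₁ h₂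

lemma dstarSet_of_ae_eq {u v : ℝ → EuclideanSpace ℝ (Fin m)}
    (huv : u =ᵐ[volume.restrict (Icc 0 T)] v) : dstarSet T Γ u v = Ioi 0 := by
  ext ε
  refine ⟨And.left, fun hε ↦ ⟨hε, ?_⟩⟩
  filter_upwards [ae_restrict_of_ae_restrict_of_subset (dstarDomain_subset_Icc T Γ ε) huv]
    with t ht
  simpa [ht] using le_of_lt hε

lemma ae_eq_of_dstar_eq_zero {u v : ℝ → EuclideanSpace ℝ (Fin m)}
    (hne : (dstarSet T Γ u v).Nonempty) (hzero : dstar T Γ u v = 0) :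
    u =ᵐ[volume.restrict (Icc 0 T)] v := by
  obtain ⟨δ, -, hδ, hδS⟩ := exists_seq_tendsto_sInf hne (bddBelow_dstarSet ..)
  rw [← dstar_eq_sInf, hzero] at hδ
  have hall : ∀ᵐ t, ∀ n, t ∈ dstarDomain T Γ (δ n) → ‖u t - v t‖ ≤ δ n :=
    ae_all_iff.mpr fun n ↦ (ae_restrict_iff' (measurableSet_dstarDomain T Γ _)).mp (hδS n).2
  rw [EventuallyEq, ae_restrict_iff' measurableSet_Icc]
  filter_upwards [hall, Γ.finite_toSet.countable.ae_notMem volume] with t ht htΓ htI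
  have hle : ∀ᶠ n in atTop, ‖u t - v t‖ ≤ δ n :=
    (hδ.eventually (eventually_mem_dstarDomain htI htΓ)).mono fun n hn ↦ ht n hn
  exact sub_eq_zero.mp (norm_le_zero_iff.mp (ge_of_tendsto hδ hle))

end

theorem stmt2_general {m : ℕ} (T : ℝ) (U : Set (EuclideanSpace ℝ (Fin m)))
    (hU : Bornology.IsBounded U) (Γ : Finset ℝ)
    (u1 u2 u3 : ℝ → EuclideanSpace ℝ (Fin m))
    (hu1 : ∀ᵐ t ∂(volume.restrict (Icc 0 T)), u1 t ∈ U)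
    (hu2 : ∀ᵐ t ∂(volume.restrict (Icc 0 T)), u2 t ∈ U)
    (hu3 : ∀ᵐ t ∂(volume.restrict (Icc 0 T)), u3 t ∈ U) :
    (0 ≤ dstar T Γ u1 u2) ∧
    (dstar T Γ u1 u2 = dstar T Γ u2 u1) ∧
    (dstar T Γ u1 u3 ≤ dstar T Γ u1 u2 + dstar T Γ u2 u3) ∧
    (dstar T Γ u1 u2 = 0 ↔ u1 =ᵐ[volume.restrict (Icc 0 T)] u2) := by
  have h12 : (dstarSet T Γ u1 u2).Nonempty := dstarSet_nonempty hU hu1 hu2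
  refine ⟨dstar_nonneg T Γ u1 u2, dstar_comm T Γ u1 u2,
    dstar_le_add h12 (dstarSet_nonempty hU hu2 hu3), ae_eq_of_dstar_eq_zero h12, fun h ↦ ?_⟩
  rw [dstar_eq_sInf, dstarSet_of_ae_eq h, csInf_Ioi]

/-- `d^*` is a metric on (a.e.-equivalence classes of) measurable functions
`[0,T] → U`; in particular it satisfies the triangle inequality. -/
theorem stmt2 {m : ℕ} (T : ℝ) (hT : 0 < T) (U : Set (EuclideanSpace ℝ (Fin m)))
    (hU : Bornology.IsBounded U) (Γ : Finset ℝ) (hΓ : (Γ : Set ℝ) ⊆ Icc 0 T)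
    (u1 u2 u3 : ℝ → EuclideanSpace ℝ (Fin m))
    (h1 : Measurable u1) (h2 : Measurable u2) (h3 : Measurable u3)
    (hu1 : ∀ᵐ t ∂(volume.restrict (Icc 0 T)), u1 t ∈ U)
    (hu2 : ∀ᵐ t ∂(volume.restrict (Icc 0 T)), u2 t ∈ U)
    (hu3 : ∀ᵐ t ∂(volume.restrict (Icc 0 T)), u3 t ∈ U) :
    (0 ≤ dstar T Γ u1 u2) ∧
    (dstar T Γ u1 u2 = dstar T Γ u2 u1) ∧
    (dstar T Γ u1 u3 ≤ dstar T Γ u1 u2 + dstar T Γ u2 u3) ∧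
    (dstar T Γ u1 u2 = 0 ↔ u1 =ᵐ[volume.restrict (Icc 0 T)] u2) :=
  stmt2_general T U hU Γ u1 u2 u3 hu1 hu2 hu3
end

section
/- Let $U\subset\mathbb R^m$ be convex and compact, and let $\sigma,\hat\sigma\in L^\infty(0,T;\mathbb R^m)$. Suppose $u,\hat u:[0,T]\to U$ are measurable and satisfy the pointwise variational inclusions $\sigma(t)+N_U(u(t))\ni 0$ and $\hat\sigma(t)+N_U(\hat u(t))\ni 0$ for a.e. $t$. If for some $t$ both inclusions hold and $\hat u(t)$ is the unique minimizer of $w\mapsto\langle\hat\sigma(t),w\rangle$ over $U$, and moreover $\min_{w\in U,\, w\ne \hat u(t) \text{ extreme}} \langle \hat\sigma(t), w - \hat u(t)\rangle > 2\,\mathrm{diam}(U)\,\|\sigma-\hat\sigma\|_\infty$, then $u(t) = \hat u(t)$. -/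
/-! The set `C = {w | 2‖a - â‖ ‖w - û‖ ≤ ⟪â, w - û⟫}` is closed and convex, and the margin
hypothesis puts every extreme point of `U` in it, so by Krein–Milman `U ⊆ C`. For the minimizer
`u` of `⟪a, ·⟫` this gives `2‖a - â‖ ‖u - û‖ ≤ ⟪â, u - û⟫ ≤ ‖a - â‖ ‖u - û‖`, hence
`⟪â, u - û⟫ ≤ 0`, and strictness of the minimizer `û` forces `u = û`. -/

open Set
open scoped RealInnerProductSpace

theorem Convex.subset_of_extremePoints_subset {E : Type*} [AddCommGroup E] [Module ℝ E]
    [TopologicalSpace E] [T2Space E] [IsTopologicalAddGroup E] [ContinuousSMul ℝ E]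
    [LocallyConvexSpace ℝ E] {U C : Set E} (hU : Convex ℝ U) (hUc : IsCompact U)
    (hC : Convex ℝ C) (hCc : IsClosed C) (hUC : U.extremePoints ℝ ⊆ C) : U ⊆ C := by
  rw [← closure_convexHull_extremePoints hUc hU]
  exact closure_minimal (convexHull_min hUC hC) hCc

section InnerProductSpace

variable {F : Type*} [NormedAddCommGroup F] [InnerProductSpace ℝ F]

theorem convex_setOf_mul_norm_sub_le_inner {c : ℝ} (hc : 0 ≤ c) (v x : F) :
    Convex ℝ {w | c * ‖w - x‖ ≤ ⟪v, w - x⟫} := by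
  let shift : F →ᵃ[ℝ] F := AffineMap.id ℝ F - AffineMap.const ℝ F x
  have hnorm := ((convexOn_norm convex_univ).comp_affineMap shift).smul hc
  have hinner := ((innerₛₗ ℝ v).concaveOn convex_univ).comp_affineMap shift
  simpa [sub_nonpos, shift] using (hnorm.sub hinner).convex_le 0

theorem isClosed_setOf_mul_norm_sub_le_inner (c : ℝ) (v x : F) :
    IsClosed {w | c * ‖w - x‖ ≤ ⟪v, w - x⟫} :=
  isClosed_le (by fun_prop) (by fun_prop)

theorem mul_norm_sub_le_inner_of_extremePoints {U : Set F} (hU : Convex ℝ U)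
    (hUc : IsCompact U) {c : ℝ} (hc : 0 ≤ c) {v x : F} (hx : x ∈ U)
    (hext : ∀ w ∈ U.extremePoints ℝ, w ≠ x → c * Metric.diam U ≤ ⟪v, w - x⟫) :
    ∀ w ∈ U, c * ‖w - x‖ ≤ ⟪v, w - x⟫ := by
  refine hU.subset_of_extremePoints_subset hUc (convex_setOf_mul_norm_sub_le_inner hc v x)
    (isClosed_setOf_mul_norm_sub_le_inner c v x) fun w hw => ?_
  change c * ‖w - x‖ ≤ ⟪v, w - x⟫
  rcases eq_or_ne w x with rfl | hwx
  · simp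
  · have hdist : ‖w - x‖ ≤ Metric.diam U := by
      rw [← dist_eq_norm]
      exact Metric.dist_le_diam_of_mem hUc.isBounded hw.1 hx
    exact (mul_le_mul_of_nonneg_left hdist hc).trans (hext w hw hwx)

theorem real_inner_le_norm_sub_mul_norm_of_inner_nonpos {a b y : F} (h : ⟪a, y⟫ ≤ 0) :
    ⟪b, y⟫ ≤ ‖a - b‖ * ‖y‖ := by
  have hsplit : ⟪b, y⟫ = ⟪b - a, y⟫ + ⟪a, y⟫ := by rw [← inner_add_left, sub_add_cancel]
  rw [hsplit, ← norm_sub_rev]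
  linarith [real_inner_le_norm (b - a) y]

end InnerProductSpace

theorem stmt12_general {m : ℕ} (U : Set (EuclideanSpace ℝ (Fin m)))
    (hconv : Convex ℝ U) (hcomp : IsCompact U)
    (a ahat : EuclideanSpace ℝ (Fin m))
    (u0 uhat0 : EuclideanSpace ℝ (Fin m)) (hu0 : u0 ∈ U) (huhat0 : uhat0 ∈ U)
    (hmin : ∀ w ∈ U, (0:ℝ) ≤ inner ℝ a (w - u0))
    (huniq : ∀ w ∈ U, w ≠ uhat0 → (inner ℝ ahat uhat0 : ℝ) < inner ℝ ahat w)
    (hmargin : ∀ w ∈ Set.extremePoints ℝ U, w ≠ uhat0 →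
      2 * Metric.diam U * ‖a - ahat‖ < (inner ℝ ahat (w - uhat0) : ℝ)) :
    u0 = uhat0 := by
  have hN : 0 ≤ ‖a - ahat‖ := norm_nonneg _
  have hlower : 2 * ‖a - ahat‖ * ‖u0 - uhat0‖ ≤ ⟪ahat, u0 - uhat0⟫ :=
    mul_norm_sub_le_inner_of_extremePoints hconv hcomp (by positivity) huhat0
      (fun w hw hwu => by linarith [hmargin w hw hwu]) u0 hu0
  have hupper : ⟪ahat, u0 - uhat0⟫ ≤ ‖a - ahat‖ * ‖u0 - uhat0‖ := by
    refine real_inner_le_norm_sub_mul_norm_of_inner_nonpos ?_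
    rw [← neg_sub, inner_neg_right, neg_nonpos]
    exact hmin uhat0 huhat0
  by_contra hne
  have hpos : 0 < ⟪ahat, u0 - uhat0⟫ := by
    rw [inner_sub_right, sub_pos]
    exact huniq u0 hu0 hne
  linarith [mul_nonneg hN (norm_nonneg (u0 - uhat0))]

theorem stmt12 {m : ℕ} (U : Set (EuclideanSpace ℝ (Fin m)))
    (hconv : Convex ℝ U) (hcomp : IsCompact U)
    (a ahat : EuclideanSpace ℝ (Fin m))
    (u0 uhat0 : EuclideanSpace ℝ (Fin m)) (hu0 : u0 ∈ U) (huhat0 : uhat0 ∈ U)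
    (hmin : ∀ w ∈ U, (0:ℝ) ≤ inner ℝ a (w - u0))
    (hhatmin : ∀ w ∈ U, (0:ℝ) ≤ inner ℝ ahat (w - uhat0))
    (huniq : ∀ w ∈ U, w ≠ uhat0 → (inner ℝ ahat uhat0 : ℝ) < inner ℝ ahat w)
    (hmargin : ∀ w ∈ Set.extremePoints ℝ U, w ≠ uhat0 →
      2 * Metric.diam U * ‖a - ahat‖ < (inner ℝ ahat (w - uhat0) : ℝ)) :
    u0 = uhat0 :=
  stmt12_general U hconv hcomp a ahat u0 uhat0 hu0 huhat0 hmin huniq hmargin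
end
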